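/- For all real numbers A₁, A₂ ≥ 0 and every real c with |c| ≤ 1, the modulation amplitude of the interference satisfies |√(A₁² + A₂² + 2A₁A₂c) − √(A₁² + A₂² − 2A₁A₂c)| ≤ 2·min(A₁, A₂). -/

import Mathlib

/-!
Write `c = Re z` with `|z| = 1`. The two envelopes are then the lengths of the phasor sum and
difference `A₁ ± A₂ z`, and the triangle inequality bounds the difference of `‖u + v‖` and
`‖u - v‖` by both `2‖u‖` and `2‖v‖`.
-/

open Complex

lemma abs_norm_add_sub_norm_sub_le_two_mul_min {E : Type*} [SeminormedAddCommGroup E] (u v : E) :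
    |‖u + v‖ - ‖u - v‖| ≤ 2 * min ‖u‖ ‖v‖ := by
  refine abs_sub_le_iff.2 ⟨norm_add_sub_norm_sub_le_two_mul_min u v, ?_⟩
  simpa [← sub_eq_add_neg] using norm_add_sub_norm_sub_le_two_mul_min u (-v)

lemma exists_norm_eq_one_re_eq {c : ℝ} (hc : |c| ≤ 1) : ∃ z : ℂ, ‖z‖ = 1 ∧ z.re = c := by
  refine ⟨c + √(1 - c ^ 2) * I, ?_, by simp⟩
  have hc2 : c ^ 2 ≤ 1 := (sq_le_one_iff_abs_le_one c).2 hc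
  rw [norm_eq_sqrt_sq_add_sq, Real.sqrt_eq_one]
  simp [Real.sq_sqrt (sub_nonneg.2 hc2)]

lemma norm_ofReal_add_ofReal_mul {z : ℂ} (hz : ‖z‖ = 1) (a b : ℝ) :
    ‖(a + b * z : ℂ)‖ = √(a ^ 2 + b ^ 2 + 2 * a * b * z.re) := by
  have hz' : z.re ^ 2 + z.im ^ 2 = 1 := by
    rw [← Real.sqrt_eq_one, ← norm_eq_sqrt_sq_add_sq, hz]
  rw [norm_eq_sqrt_sq_add_sq]
  congr 1
  simp only [add_re, ofReal_re, mul_re, ofReal_im, zero_mul, sub_zero, add_im, mul_im, add_zero,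
    zero_add]
  linear_combination b ^ 2 * hz'

/-- Modulation amplitude bound: for `A₁, A₂ ≥ 0` and `|c| ≤ 1`,
`|√(A₁² + A₂² + 2A₁A₂c) − √(A₁² + A₂² − 2A₁A₂c)| ≤ 2·min(A₁, A₂)`. -/
theorem modulation_amplitude_le (A₁ A₂ c : ℝ) (hA₁ : 0 ≤ A₁) (hA₂ : 0 ≤ A₂)
    (hc : |c| ≤ 1) :
    |Real.sqrt (A₁ ^ 2 + A₂ ^ 2 + 2 * A₁ * A₂ * c) -
        Real.sqrt (A₁ ^ 2 + A₂ ^ 2 - 2 * A₁ * A₂ * c)| ≤ 2 * min A₁ A₂ := by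
  obtain ⟨z, hz, rfl⟩ := exists_norm_eq_one_re_eq hc
  have h_sum := norm_ofReal_add_ofReal_mul hz A₁ A₂
  have h_diff : ‖(A₁ - A₂ * z : ℂ)‖ = √(A₁ ^ 2 + A₂ ^ 2 - 2 * A₁ * A₂ * z.re) := by
    rw [sub_eq_add_neg, ← neg_mul, ← ofReal_neg, norm_ofReal_add_ofReal_mul hz]
    ring_nf
  have h_norm₁ : ‖(A₁ : ℂ)‖ = A₁ := by simp [hA₁]
  have h_norm₂ : ‖(A₂ * z : ℂ)‖ = A₂ := by simp [hz, hA₂]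
  simpa only [h_sum, h_diff, h_norm₁, h_norm₂] using
    abs_norm_add_sub_norm_sub_le_two_mul_min (A₁ : ℂ) (A₂ * z)
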